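/- arXiv:2103.06613 — 9 statements merged into one kernel-verified Lean document; each statement's English description precedes it below -/
import Mathlib

section
/- Let q ≥ 1, n ≥ 1, let G be a real q×n matrix, let X ⊆ ℝⁿ be nonempty, Γ(x) = (Gx, −eᵀGx), P := Γ[X] + ℝ₊^{q+1}, Y := {Gx : x ∈ X}, and H := {y ∈ ℝ^{q+1} : eᵀy = 0}. If P_inner ⊆ ℝ^{q+1} satisfies P_inner ⊆ P, then π[P_inner ∩ H] ⊆ Y. -/
noncomputable section
open Pointwise

def euc {m : ℕ} (x : Fin m → ℝ) : EuclideanSpace ℝ (Fin m) := WithLp.toLp 2 x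

def Gam {q n : ℕ} (G : Matrix (Fin q) (Fin n) ℝ) (x : Fin n → ℝ) :
    EuclideanSpace ℝ (Fin (q + 1)) :=
  euc (Fin.snoc (G.mulVec x) (-(∑ j, G.mulVec x j)))

def orth (m : ℕ) : Set (EuclideanSpace ℝ (Fin m)) := {y | ∀ i, 0 ≤ y i}

def hyp (q : ℕ) : Set (EuclideanSpace ℝ (Fin (q + 1))) := {y | ∑ i, y i = 0}

def proj {q : ℕ} (y : EuclideanSpace ℝ (Fin (q + 1))) : EuclideanSpace ℝ (Fin q) :=
  euc (fun i => y i.castSucc)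

def phi {q : ℕ} (y ys : EuclideanSpace ℝ (Fin (q + 1))) : ℝ :=
  (∑ i : Fin q, y i.castSucc * ys i.castSucc) +
    y (Fin.last q) * (1 - ∑ i : Fin q, ys i.castSucc) - ys (Fin.last q)

theorem Gam_mem_hyp {q n : ℕ} (G : Matrix (Fin q) (Fin n) ℝ) (x : Fin n → ℝ) :
    Gam G x ∈ hyp q := by
  simp [hyp, Gam, euc, Fin.sum_univ_castSucc]

theorem proj_Gam {q n : ℕ} (G : Matrix (Fin q) (Fin n) ℝ) (x : Fin n → ℝ) :
    proj (Gam G x) = euc (G.mulVec x) := by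
  ext i
  simp [proj, Gam, euc]

theorem eq_zero_of_mem_orth_of_mem_hyp {q : ℕ} {c : EuclideanSpace ℝ (Fin (q + 1))}
    (hc : c ∈ orth (q + 1)) (hcH : c ∈ hyp q) : c = 0 := by
  ext i
  exact (Finset.sum_eq_zero_iff_of_nonneg fun j _ => hc j).mp hcH i (Finset.mem_univ i)

theorem add_orth_inter_hyp {q : ℕ} {S : Set (EuclideanSpace ℝ (Fin (q + 1)))}
    (hS : S ⊆ hyp q) : (S + orth (q + 1)) ∩ hyp q = S := by
  refine subset_antisymm ?_ fun s hs => ⟨⟨s, hs, 0, fun _ => le_rfl, add_zero s⟩, hS hs⟩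
  rintro _ ⟨⟨s, hs, c, hc, rfl⟩, hsc⟩
  have hcH : c ∈ hyp q := by
    have hsum : ∑ i, (s i + c i) = 0 := hsc
    rwa [Finset.sum_add_distrib, show ∑ i, s i = 0 from hS hs, zero_add] at hsum
  show s + c ∈ S
  rwa [eq_zero_of_mem_orth_of_mem_hyp hc hcH, add_zero]

theorem stmt_2_general (q n : ℕ)
    (G : Matrix (Fin q) (Fin n) ℝ) (X : Set (Fin n → ℝ))
    (Pinner : Set (EuclideanSpace ℝ (Fin (q + 1))))
    (h : Pinner ⊆ (Gam G '' X) + orth (q + 1)) :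
    proj '' (Pinner ∩ hyp q) ⊆ (fun x => euc (G.mulVec x)) '' X := by
  have hGam : Gam G '' X ⊆ hyp q := Set.image_subset_iff.mpr fun x _ => Gam_mem_hyp G x
  calc proj '' (Pinner ∩ hyp q)
      ⊆ proj '' ((Gam G '' X + orth (q + 1)) ∩ hyp q) :=
        Set.image_mono (Set.inter_subset_inter_left _ h)
    _ = proj '' (Gam G '' X) := by rw [add_orth_inter_hyp hGam]
    _ = (fun x => euc (G.mulVec x)) '' X := by
        rw [Set.image_image]
        simp only [proj_Gam]

/-- P_inner ⊆ P implies π[P_inner ∩ H] ⊆ Y. -/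
theorem stmt_2 (q n : ℕ) (hq : 1 ≤ q) (hn : 1 ≤ n)
    (G : Matrix (Fin q) (Fin n) ℝ) (X : Set (Fin n → ℝ)) (hX : X.Nonempty)
    (Pinner : Set (EuclideanSpace ℝ (Fin (q + 1))))
    (h : Pinner ⊆ (Gam G '' X) + orth (q + 1)) :
    proj '' (Pinner ∩ hyp q) ⊆ (fun x => euc (G.mulVec x)) '' X :=
  stmt_2_general q n G X Pinner h
end
end

section
/- Let q ≥ 1, let ε > 0, let S ⊆ ℝ^{q+1} be a nonempty convex set, and let V ⊆ ℝ^{q+1} be a nonempty finite set such that for every v ∈ V there exists o ∈ S with o ≤ v + εe (componentwise). Then (conv V + ℝ₊^{q+1}) + {εe} ⊆ S + ℝ₊^{q+1}. (This is the content of the stopping criterion of the primal Benson type algorithm: if every vertex v of the outer approximation P_outer = conv V + ℝ₊^{q+1} admits a point o of the image Γ[X] with o − v ≤ εe, then P_outer + εe is contained in the upper image P = Γ[X] + ℝ₊^{q+1}.) -/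
noncomputable section
open Pointwise

theorem convex_orth (m : ℕ) : Convex ℝ (orth m) := by
  intro x hx y hy a b ha hb _ i
  simp only [PiLp.add_apply, PiLp.smul_apply, smul_eq_mul]
  exact add_nonneg (mul_nonneg ha (hx i)) (mul_nonneg hb (hy i))

theorem orth_add_orth_subset (m : ℕ) : orth m + orth m ⊆ orth m := by
  rintro _ ⟨x, hx, y, hy, rfl⟩ i
  exact add_nonneg (hx i) (hy i)

theorem mem_add_orth_iff {m : ℕ} {S : Set (EuclideanSpace ℝ (Fin m))}
    {y : EuclideanSpace ℝ (Fin m)} : y ∈ S + orth m ↔ ∃ o ∈ S, ∀ i, o i ≤ y i := by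
  constructor
  · rintro ⟨o, ho, r, hr, rfl⟩
    exact ⟨o, ho, fun i => le_add_of_nonneg_right (hr i)⟩
  · rintro ⟨o, ho, hle⟩
    exact ⟨o, ho, y - o, fun i => sub_nonneg.2 (hle i), add_sub_cancel o y⟩

theorem stmt_4_general (q : ℕ) (ε : ℝ)
    (S : Set (EuclideanSpace ℝ (Fin (q + 1)))) (hSconv : Convex ℝ S)
    (V : Set (EuclideanSpace ℝ (Fin (q + 1))))
    (h : ∀ v ∈ V, ∃ o ∈ S, ∀ i, o i ≤ v i + ε) :
    (convexHull ℝ V + orth (q + 1)) + {euc fun _ => ε} ⊆ S + orth (q + 1) := by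
  set c : EuclideanSpace ℝ (Fin (q + 1)) := euc fun _ => ε
  have hV : V + {c} ⊆ S + orth (q + 1) := by
    rintro _ ⟨v, hv, _, rfl, rfl⟩
    exact mem_add_orth_iff.2 (h v hv)
  have hhull : convexHull ℝ V + {c} ⊆ S + orth (q + 1) := by
    rw [← convexHull_singleton (𝕜 := ℝ) c, ← convexHull_add]
    exact convexHull_min hV (hSconv.add (convex_orth _))
  calc convexHull ℝ V + orth (q + 1) + {c}
      = convexHull ℝ V + {c} + orth (q + 1) := add_right_comm _ _ _
    _ ⊆ S + orth (q + 1) + orth (q + 1) := Set.add_subset_add_right hhull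
    _ ⊆ S + orth (q + 1) := by
      rw [add_assoc]
      exact Set.add_subset_add_left (orth_add_orth_subset _)

/-- stopping criterion of the primal Benson algorithm. -/
theorem stmt_4 (q : ℕ) (hq : 1 ≤ q) (ε : ℝ) (hε : 0 < ε)
    (S : Set (EuclideanSpace ℝ (Fin (q + 1)))) (hS : S.Nonempty) (hSconv : Convex ℝ S)
    (V : Set (EuclideanSpace ℝ (Fin (q + 1)))) (hVne : V.Nonempty) (hVfin : V.Finite)
    (h : ∀ v ∈ V, ∃ o ∈ S, ∀ i, o i ≤ v i + ε) :
    (convexHull ℝ V + orth (q + 1)) + {euc fun _ => ε} ⊆ S + orth (q + 1) :=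
  stmt_4_general q ε S hSconv V h
end
end

section
/- Let q ≥ 1 and ε ≥ 0. If t ∈ ℝ^q satisfies tᵢ ≤ ε for all i ∈ {1, …, q} and ∑_{i=1}^q tᵢ ≥ −ε, then ‖t‖₂ ≤ ε√(q² + q − 1). Moreover this bound is attained, e.g. by the point t = (−εq, ε, …, ε). -/
/-!
Put `sᵢ = ε - tᵢ ≥ 0` and `S = ∑ sᵢ`, so that `0 ≤ S ≤ (q + 1) ε`. Expanding,
`‖t‖² = q ε² - 2 ε S + ∑ sᵢ² ≤ q ε² - 2 ε S + S²`, a convex function of `S` whose maximum on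
`[0, (q + 1) ε]` is `ε² (q² + q - 1)`, taken at `S = (q + 1) ε`. Equality needs all of `S` in a
single coordinate, which is the vertex `(-ε q, ε, …, ε)`.
-/
noncomputable section
open Pointwise

open Finset

section Polytope

variable {ι : Type*} [Fintype ι]

theorem sum_sq_le_of_le_of_neg_le_sum [Nonempty ι] {t : ι → ℝ} {ε : ℝ}
    (ht : ∀ i, t i ≤ ε) (hsum : -ε ≤ ∑ i, t i) :
    ∑ i, t i ^ 2 ≤ ε ^ 2 * ((Fintype.card ι : ℝ) ^ 2 + Fintype.card ι - 1) := by
  set n : ℝ := (Fintype.card ι : ℝ)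
  have hn : 1 ≤ n := Nat.one_le_cast.2 Fintype.card_pos
  set S := ∑ i, (ε - t i)
  have hS_nonneg : 0 ≤ S := sum_nonneg fun i _ ↦ sub_nonneg.2 (ht i)
  have hS_le : S ≤ (n + 1) * ε := by
    have : S = n * ε - ∑ i, t i := by
      simp only [S, n, sum_sub_distrib, sum_const, card_univ, nsmul_eq_mul]
    linarith
  have hexpand : ∑ i, t i ^ 2 = n * ε ^ 2 - 2 * ε * S + ∑ i, (ε - t i) ^ 2 := by
    rw [sum_congr rfl fun i _ ↦ (by ring : t i ^ 2 = ε ^ 2 - 2 * ε * (ε - t i) + (ε - t i) ^ 2),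
      sum_add_distrib, sum_sub_distrib, ← mul_sum]
    simp only [n, S, sum_const, card_univ, nsmul_eq_mul]
  have hsq : ∑ i, (ε - t i) ^ 2 ≤ S ^ 2 :=
    sum_sq_le_sq_sum_of_nonneg fun i _ ↦ sub_nonneg.2 (ht i)
  nlinarith [mul_nonneg (sub_nonneg.2 hS_le) (by nlinarith : 0 ≤ S + (n - 1) * ε)]

theorem sum_ite_eq_add_card_sub_one_mul [DecidableEq ι] (i₀ : ι) (a b : ℝ) :
    ∑ j, (if j = i₀ then a else b) = a + ((Fintype.card ι : ℝ) - 1) * b := by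
  rw [← add_sum_erase _ _ (mem_univ i₀), if_pos rfl,
    sum_congr rfl fun j hj ↦ if_neg (ne_of_mem_erase hj), sum_const,
    card_erase_of_mem (mem_univ i₀), card_univ, nsmul_eq_mul,
    Nat.cast_pred (Fintype.card_pos_iff.2 ⟨i₀⟩)]

theorem norm_le_of_forall_le_of_neg_le_sum [Nonempty ι] {t : EuclideanSpace ℝ ι} {ε : ℝ}
    (hε : 0 ≤ ε) (ht : ∀ i, t i ≤ ε) (hsum : -ε ≤ ∑ i, t i) :
    ‖t‖ ≤ ε * √((Fintype.card ι : ℝ) ^ 2 + Fintype.card ι - 1) := by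
  rw [← Real.sqrt_sq hε, ← Real.sqrt_mul (sq_nonneg ε), ← Real.sqrt_sq (norm_nonneg t),
    EuclideanSpace.real_norm_sq_eq]
  exact Real.sqrt_le_sqrt (sum_sq_le_of_le_of_neg_le_sum ht hsum)

variable [DecidableEq ι]

def polytopeVertex (ε : ℝ) (i₀ : ι) : EuclideanSpace ℝ ι :=
  WithLp.toLp 2 fun j ↦ if j = i₀ then -(ε * Fintype.card ι) else ε

theorem polytopeVertex_apply_le {ε : ℝ} (hε : 0 ≤ ε) (i₀ j : ι) : polytopeVertex ε i₀ j ≤ ε := by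
  simp only [polytopeVertex, WithLp.ofLp_toLp]
  split_ifs
  · linarith [mul_nonneg hε (Fintype.card ι).cast_nonneg]
  · exact le_rfl

theorem sum_polytopeVertex (ε : ℝ) (i₀ : ι) : ∑ j, polytopeVertex ε i₀ j = -ε := by
  simp only [polytopeVertex, sum_ite_eq_add_card_sub_one_mul]
  ring

theorem norm_polytopeVertex {ε : ℝ} (hε : 0 ≤ ε) (i₀ : ι) :
    ‖polytopeVertex ε i₀‖ = ε * √((Fintype.card ι : ℝ) ^ 2 + Fintype.card ι - 1) := by
  have hsq : ‖polytopeVertex ε i₀‖ ^ 2 =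
      ε ^ 2 * ((Fintype.card ι : ℝ) ^ 2 + Fintype.card ι - 1) := by
    simp only [EuclideanSpace.real_norm_sq_eq, polytopeVertex, apply_ite (· ^ 2),
      sum_ite_eq_add_card_sub_one_mul]
    ring
  rw [← Real.sqrt_sq (norm_nonneg _), hsq, Real.sqrt_mul (sq_nonneg ε), Real.sqrt_sq hε]

end Polytope

/-- norm bound on the polytope T, and its attainment at (−εq, ε, …, ε). -/
theorem stmt_6 (q : ℕ) (hq : 1 ≤ q) (ε : ℝ) (hε : 0 ≤ ε) :
    (∀ t : EuclideanSpace ℝ (Fin q), (∀ i, t i ≤ ε) → -ε ≤ ∑ i, t i →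
      ‖t‖ ≤ ε * Real.sqrt ((q : ℝ) ^ 2 + q - 1)) ∧
    (∀ i, (euc fun j : Fin q => if (j : ℕ) = 0 then -(ε * q) else ε) i ≤ ε) ∧
    (-ε ≤ ∑ i, (euc fun j : Fin q => if (j : ℕ) = 0 then -(ε * q) else ε) i) ∧
    ‖euc fun j : Fin q => if (j : ℕ) = 0 then -(ε * q) else ε‖
      = ε * Real.sqrt ((q : ℝ) ^ 2 + q - 1) := by
  have : Nonempty (Fin q) := ⟨⟨0, hq⟩⟩
  have hvertex : (euc fun j : Fin q => if (j : ℕ) = 0 then -(ε * q) else ε)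
      = polytopeVertex ε ⟨0, hq⟩ := by
    simp [euc, polytopeVertex, Fin.ext_iff]
  rw [hvertex]
  refine ⟨fun t ht hsum ↦ ?_, polytopeVertex_apply_le hε _, (sum_polytopeVertex ε _).ge, ?_⟩
  · simpa using norm_le_of_forall_le_of_neg_le_sum hε ht hsum
  · simpa using norm_polytopeVertex hε (⟨0, hq⟩ : Fin q)
end
end

section
/- Let q ≥ 1 and ε = 1/(q+1). Let P := {x ∈ ℝ^{q+1} : x + (1/(q+1))e ≥ 0 and eᵀ(x + (1/(q+1))e) ≥ 1} and P_outer := {−(1/(q+1))e} + ℝ₊^{q+1}. Then P ⊆ P_outer, P_outer + {εe} ⊆ P, and d_H(P_outer, P) = ε√(q+1) = 1/√(q+1). In particular, the bound d_H(P_outer, P) ≤ ε√(q+1) for outer approximations of upper images of multiobjective convex programs is tight. -/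
noncomputable section
open Pointwise

/-!
Write `m = q + 1` and `c = 1 / m`. The orthant `-c • 1 + ℝ₊ᵐ` contains `P`, and the translation
by `c • 1`, of length `c √m`, maps it into `P`; hence `d_H ≤ c √m`. Conversely, the coordinates of
any `y ∈ P` exceed those of the vertex `-c • 1` by a total of at least `1`, so Cauchy–Schwarz gives
`1 ≤ √m · dist (-c • 1) y`. Since `m c = 1`, both bounds equal `1 / √m`.
-/

theorem singleton_add_orth_eq {m : ℕ} (a : ℝ) :
    {euc fun _ => a} + orth m = {x | ∀ i, a ≤ x i} := by
  ext x
  simp only [Set.singleton_add, Set.mem_image, orth, Set.mem_ofPred_eq]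
  constructor
  · rintro ⟨y, hy, rfl⟩ i
    simpa [euc] using hy i
  · intro hx
    refine ⟨x - euc fun _ => a, fun i => by simpa [euc] using hx i, ?_⟩
    simp

theorem norm_euc_const {m : ℕ} (a : ℝ) : ‖euc fun _ : Fin m => a‖ = |a| * Real.sqrt m := by
  rw [EuclideanSpace.norm_eq, mul_comm, ← Real.sqrt_sq_eq_abs, ← Real.sqrt_mul (Nat.cast_nonneg m)]
  simp [euc]

theorem sum_sub_le_sqrt_card_mul_dist {ι : Type*} [Fintype ι] (x y : EuclideanSpace ℝ ι) :
    ∑ i, (y i - x i) ≤ Real.sqrt (Fintype.card ι) * dist x y := by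
  have hcs : (∑ i, (y i - x i)) ^ 2 ≤ Fintype.card ι * ∑ i, dist (y i) (x i) ^ 2 := by
    simpa only [Real.dist_eq, sq_abs, Finset.card_univ] using
      sq_sum_le_card_mul_sum_sq (s := Finset.univ) (f := fun i => y i - x i)
  calc ∑ i, (y i - x i) ≤ Real.sqrt ((∑ i, (y i - x i)) ^ 2) :=
        (le_abs_self _).trans (Real.sqrt_sq_eq_abs _).ge
    _ ≤ Real.sqrt (Fintype.card ι * ∑ i, dist (y i) (x i) ^ 2) := Real.sqrt_le_sqrt hcs
    _ = Real.sqrt (Fintype.card ι) * dist x y := by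
      rw [Real.sqrt_mul (Nat.cast_nonneg _), dist_comm x y, EuclideanSpace.dist_eq]

theorem one_div_sqrt_card_le_dist {ι : Type*} [Fintype ι] {x y : EuclideanSpace ℝ ι}
    (h : 1 ≤ ∑ i, (y i - x i)) : 1 / Real.sqrt (Fintype.card ι) ≤ dist x y :=
  div_le_of_le_mul₀ (Real.sqrt_nonneg _) dist_nonneg
    (by simpa only [mul_comm] using h.trans (sum_sub_le_sqrt_card_mul_dist x y))

theorem Metric.hausdorffDist_eq_of_subset {α : Type*} [PseudoMetricSpace α] {M N : Set α}
    {r : ℝ} (hMN : M ⊆ N) (hM : M.Nonempty) (hclose : ∀ x ∈ N, ∃ y ∈ M, dist x y ≤ r)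
    (hfar : ∃ x ∈ N, ∀ y ∈ M, r ≤ dist x y) : hausdorffDist N M = r := by
  obtain ⟨y₀, hy₀⟩ := hM
  have hr : 0 ≤ r := by
    obtain ⟨_, _, h⟩ := hclose y₀ (hMN hy₀)
    exact dist_nonneg.trans h
  have hback : ∀ y ∈ M, ∃ x ∈ N, dist y x ≤ r := fun y hy => ⟨y, hMN hy, by simpa using hr⟩
  have hfin : hausdorffEDist N M ≠ ⊤ := by
    refine ne_top_of_le_ne_top ENNReal.ofReal_ne_top
      (hausdorffEDist_le_of_mem_edist (r := ENNReal.ofReal r) ?_ ?_)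
    · exact fun x hx => (hclose x hx).imp fun y ⟨hy, h⟩ => ⟨hy, (edist_le_ofReal hr).2 h⟩
    · exact fun y hy => (hback y hy).imp fun x ⟨hx, h⟩ => ⟨hx, (edist_le_ofReal hr).2 h⟩
  obtain ⟨x, hx, hxM⟩ := hfar
  refine le_antisymm (hausdorffDist_le_of_mem_dist hr hclose hback) ?_
  exact ((le_infDist ⟨y₀, hy₀⟩).2 fun y hy => hxM y hy).trans
    (infDist_le_hausdorffDist_of_mem hx hfin)

section SimplexUpperSet

variable {m : ℕ} {c : ℝ}

def simplexUpperSet (m : ℕ) (c : ℝ) : Set (EuclideanSpace ℝ (Fin m)) :=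
  {x | (∀ i, 0 ≤ x i + c) ∧ 1 ≤ ∑ i, (x i + c)}

theorem simplexUpperSet_subset : simplexUpperSet m c ⊆ {x | ∀ i, -c ≤ x i} :=
  fun x hx i => by linarith [hx.1 i]

theorem add_const_subset_simplexUpperSet (hc : 0 ≤ c) (hmc : 1 ≤ m * c) :
    {x | ∀ i, -c ≤ x i} + {euc fun _ => c} ⊆ simplexUpperSet m c := by
  rintro _ ⟨x, hx, _, rfl, rfl⟩
  have hle : ∀ i, c ≤ (x + euc fun _ => c : EuclideanSpace ℝ (Fin m)) i + c := fun i => by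
    change c ≤ x i + c + c
    linarith [hx i]
  refine ⟨fun i => hc.trans (hle i), hmc.trans ?_⟩
  simpa using Finset.sum_le_sum fun i (_ : i ∈ Finset.univ) => hle i

theorem mul_sqrt_eq_one_div_sqrt (hmc : m * c = 1) : c * Real.sqrt m = 1 / Real.sqrt m := by
  rw [eq_one_div_of_mul_eq_one_right hmc, one_div_mul_eq_div, Real.sqrt_div_self']

theorem hausdorffDist_orthant_simplexUpperSet (hmc : m * c = 1) :
    Metric.hausdorffDist {x | ∀ i, -c ≤ x i} (simplexUpperSet m c) = c * Real.sqrt m := by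
  have hc : 0 < c := pos_of_mul_pos_right (hmc ▸ one_pos) (Nat.cast_nonneg m)
  have hadd := add_const_subset_simplexUpperSet hc.le hmc.ge
  have hvertex : (euc fun _ => -c : EuclideanSpace ℝ (Fin m)) ∈ {x | ∀ i, -c ≤ x i} :=
    fun _ => le_rfl
  refine Metric.hausdorffDist_eq_of_subset simplexUpperSet_subset
    ⟨_, hadd (Set.add_mem_add hvertex rfl)⟩ ?_ ⟨_, hvertex, ?_⟩
  · refine fun x hx => ⟨_, hadd (Set.add_mem_add hx rfl), ?_⟩
    rw [dist_self_add_right, norm_euc_const, abs_of_pos hc]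
  · intro y hy
    have hsum : 1 ≤ ∑ i, (y i - (euc fun _ => -c : EuclideanSpace ℝ (Fin m)) i) := by
      simpa [euc] using hy.2
    simpa [mul_sqrt_eq_one_div_sqrt hmc] using one_div_sqrt_card_le_dist hsum

end SimplexUpperSet

theorem stmt_8_general (q : ℕ) (ε : ℝ) (hε : ε = 1 / ((q : ℝ) + 1))
    (P Pouter : Set (EuclideanSpace ℝ (Fin (q + 1))))
    (hP : P = {x | (∀ i, 0 ≤ x i + 1 / ((q : ℝ) + 1)) ∧
      1 ≤ ∑ i, (x i + 1 / ((q : ℝ) + 1))})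
    (hPo : Pouter = {euc fun _ => -(1 / ((q : ℝ) + 1))} + orth (q + 1)) :
    P ⊆ Pouter ∧ Pouter + {euc fun _ => ε} ⊆ P ∧
    Metric.hausdorffDist Pouter P = ε * Real.sqrt ((q : ℝ) + 1) ∧
    ε * Real.sqrt ((q : ℝ) + 1) = 1 / Real.sqrt ((q : ℝ) + 1) := by
  have hmc : ((q + 1 : ℕ) : ℝ) * ε = 1 := by
    rw [hε, Nat.cast_succ]
    field_simp
  have hε0 : 0 ≤ ε := by
    rw [hε]
    positivity
  rw [singleton_add_orth_eq, ← hε] at hPo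
  rw [← hε] at hP
  change P = simplexUpperSet (q + 1) ε at hP
  subst hP hPo
  have hsqrt := congrArg Real.sqrt (Nat.cast_succ (R := ℝ) q)
  exact ⟨simplexUpperSet_subset, add_const_subset_simplexUpperSet hε0 hmc.ge,
    hsqrt ▸ hausdorffDist_orthant_simplexUpperSet hmc, hsqrt ▸ mul_sqrt_eq_one_div_sqrt hmc⟩

/-- tightness of the bound ε√(q+1) for the primal algorithm (Example 3.1). -/
theorem stmt_8 (q : ℕ) (hq : 1 ≤ q) (ε : ℝ) (hε : ε = 1 / ((q : ℝ) + 1))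
    (P Pouter : Set (EuclideanSpace ℝ (Fin (q + 1))))
    (hP : P = {x | (∀ i, 0 ≤ x i + 1 / ((q : ℝ) + 1)) ∧
      1 ≤ ∑ i, (x i + 1 / ((q : ℝ) + 1))})
    (hPo : Pouter = {euc fun _ => -(1 / ((q : ℝ) + 1))} + orth (q + 1)) :
    P ⊆ Pouter ∧ Pouter + {euc fun _ => ε} ⊆ P ∧
    Metric.hausdorffDist Pouter P = ε * Real.sqrt ((q : ℝ) + 1) ∧
    ε * Real.sqrt ((q : ℝ) + 1) = 1 / Real.sqrt ((q : ℝ) + 1) :=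
  stmt_8_general q ε hε P Pouter hP hPo
end
end

section
/- Let q ≥ 2, ε = 1/(q+2), and u := (1/(q+2), …, 1/(q+2), 2/(q+2)) ∈ ℝ^q (first q−1 coordinates equal 1/(q+2), last coordinate 2/(q+2)). Let Y := conv{0, e¹, …, e^{q−1}, u} and Y_outer := conv{0, e¹, …, e^q}, where eⁱ denotes the i-th standard unit vector of ℝ^q. Then Y ⊆ Y_outer and d_H(Y_outer, Y) = ‖e^q − u‖₂ = ε√(q² + q − 1). In particular, the bound d_H(Y_outer, Y) ≤ ε√(q² + q − 1) for outer polyhedral approximations of convex projection problems is tight. -/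
/-!
The linear map `x ↦ x + x_L • (u - e_L)` fixes `0` and every `e_i` with `i ≠ L` and sends `e_L`
to `u`, so it maps `conv {0, e_i}` into `Y` and moves each point `x` by
`x_L ‖e_L - u‖ ≤ ‖e_L - u‖`. Conversely, every generator `v` of `Y` satisfies
`⟪e_L - u, v - u⟫ ≤ 0`, so `Y` lies in a half-space on which `u` is the point nearest to `e_L`,
and `e_L` is at distance at least `‖e_L - u‖` from `Y`.
-/

noncomputable section
open Pointwise

open Metric Set

theorem Metric.hausdorffDist_eq_of_subset_s9 {X : Type*} [PseudoMetricSpace X] {s t : Set X}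
    {p : X} {r : ℝ} (ht : Bornology.IsBounded t) (hst : s ⊆ t) (hp : p ∈ t)
    (hnear : ∀ x ∈ t, ∃ y ∈ s, dist x y ≤ r) (hfar : ∀ y ∈ s, r ≤ dist p y) :
    hausdorffDist t s = r := by
  obtain ⟨y₀, hy₀, hpy₀⟩ := hnear p hp
  have hr : 0 ≤ r := dist_nonneg.trans hpy₀
  have hfin : hausdorffEDist t s ≠ ⊤ :=
    hausdorffEDist_ne_top_of_nonempty_of_bounded ⟨p, hp⟩ ⟨y₀, hy₀⟩ ht (ht.subset hst)
  refine le_antisymm ?_ ?_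
  · exact hausdorffDist_le_of_mem_dist hr hnear fun y hy => ⟨y, hst hy, by simpa using hr⟩
  · exact ((le_infDist ⟨y₀, hy₀⟩).2 hfar).trans (infDist_le_hausdorffDist_of_mem hp hfin)

section InnerProductSpace

variable {E : Type*} [NormedAddCommGroup E] [InnerProductSpace ℝ E]

theorem norm_sub_le_dist_of_inner_nonpos {p u y : E} (h : inner ℝ (p - u) (y - u) ≤ 0) :
    ‖p - u‖ ≤ dist p y := by
  have hexpand : ‖p - y‖ ^ 2 = ‖p - u‖ ^ 2 - 2 * inner ℝ (p - u) (y - u) + ‖y - u‖ ^ 2 := by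
    rw [← norm_sub_sq_real, sub_sub_sub_cancel_right]
  rw [dist_eq_norm]
  exact le_of_sq_le_sq (by nlinarith [sq_nonneg ‖y - u‖]) (norm_nonneg _)

theorem norm_sub_le_dist_of_mem_convexHull {p u : E} {s : Set E}
    (hs : ∀ v ∈ s, inner ℝ (p - u) (v - u) ≤ 0) {y : E} (hy : y ∈ convexHull ℝ s) :
    ‖p - u‖ ≤ dist p y := by
  have hconv : Convex ℝ {y | inner ℝ (p - u) y ≤ inner ℝ (p - u) u} :=
    (convex_Iic _).linear_preimage (innerₛₗ ℝ (p - u))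
  refine norm_sub_le_dist_of_inner_nonpos ?_
  have := convexHull_min (fun v hv => by simpa [inner_sub_right] using hs v hv) hconv hy
  simpa [inner_sub_right] using this

end InnerProductSpace

theorem Fintype.sum_ite_eq_card_mul_add {ι R : Type*} [Fintype ι] [DecidableEq ι] [Ring R]
    (L : ι) (a b : R) : ∑ i, (if i = L then a else b) = Fintype.card ι * b + (a - b) := by
  have h : ∀ i, (if i = L then a else b) = b + if i = L then a - b else 0 := by
    intro i
    split_ifs <;> abel
  simp [h, Finset.sum_add_distrib]

section CornerSimplex

open EuclideanSpace (single)

variable {ι : Type*} [DecidableEq ι]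

def cornerSimplex (ι : Type*) [DecidableEq ι] : Set (EuclideanSpace ℝ ι) :=
  convexHull ℝ (insert 0 (range fun i => single i 1))

def replaceVertex (L : ι) (u : EuclideanSpace ℝ ι) : Set (EuclideanSpace ℝ ι) :=
  convexHull ℝ (insert 0 (insert u ((fun i => single i 1) '' {L}ᶜ)))

theorem replaceVertex_subset_cornerSimplex {L : ι} {u : EuclideanSpace ℝ ι}
    (hu : u ∈ cornerSimplex ι) : replaceVertex L u ⊆ cornerSimplex ι := by
  refine convexHull_min ?_ (convex_convexHull ℝ _)
  rintro _ (rfl | rfl | ⟨i, -, rfl⟩)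
  exacts [subset_convexHull ℝ _ (mem_insert _ _), hu,
    subset_convexHull ℝ _ (mem_insert_of_mem _ (mem_range_self i))]

def vertexRetraction (L : ι) (u : EuclideanSpace ℝ ι) :
    EuclideanSpace ℝ ι →ₗ[ℝ] EuclideanSpace ℝ ι :=
  LinearMap.id + (EuclideanSpace.projₗ L).smulRight (u - single L 1)

theorem vertexRetraction_apply (L : ι) (u x : EuclideanSpace ℝ ι) :
    vertexRetraction L u x = x + x L • (u - single L 1) := rfl

theorem vertexRetraction_image_cornerSimplex_subset (L : ι) (u : EuclideanSpace ℝ ι) :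
    vertexRetraction L u '' cornerSimplex ι ⊆ replaceVertex L u := by
  rw [cornerSimplex, LinearMap.image_convexHull]
  refine convexHull_mono ?_
  rintro _ ⟨_, (rfl | ⟨i, rfl⟩), rfl⟩
  · simp
  · by_cases hi : i = L
    · subst hi
      simp [vertexRetraction_apply]
    · simp [vertexRetraction_apply, Ne.symm hi]
      exact Or.inr ⟨i, hi, rfl⟩

variable [Fintype ι]

theorem toLp_mem_cornerSimplex {w : ι → ℝ} (hw : ∀ i, 0 ≤ w i) (hsum : ∑ i, w i ≤ 1) :
    WithLp.toLp 2 w ∈ cornerSimplex ι := by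
  have hdecomp : WithLp.toLp 2 w =
      ∑ o : Option ι, o.elim (1 - ∑ i, w i) w • o.elim 0 fun i => single i 1 := by
    ext j
    simp [Fintype.sum_option, Pi.single_apply]
  rw [hdecomp]
  refine (convex_convexHull ℝ _).sum_mem (fun o _ => ?_) ?_ (fun o _ => ?_)
  · cases o <;> simp [*]
  · simp [Fintype.sum_option]
  · exact subset_convexHull ℝ _ (by cases o <;> simp)

theorem norm_le_one_of_mem_cornerSimplex {x : EuclideanSpace ℝ ι} (hx : x ∈ cornerSimplex ι) :
    ‖x‖ ≤ 1 := by
  have := convexHull_min ?_ (convex_closedBall (0 : EuclideanSpace ℝ ι) 1) hx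
  · simpa using this
  rintro _ (rfl | ⟨i, rfl⟩) <;> simp

theorem dist_vertexRetraction_le {L : ι} {u x : EuclideanSpace ℝ ι}
    (hx : x ∈ cornerSimplex ι) : dist x (vertexRetraction L u x) ≤ ‖single L 1 - u‖ := by
  have hxL : ‖x L‖ ≤ 1 := (PiLp.norm_apply_le x L).trans (norm_le_one_of_mem_cornerSimplex hx)
  rw [vertexRetraction_apply, dist_eq_norm, sub_add_cancel_left, norm_neg, norm_smul,
    norm_sub_rev]
  exact mul_le_of_le_one_left (norm_nonneg _) hxL

theorem hausdorffDist_cornerSimplex_replaceVertex {L : ι} {u : EuclideanSpace ℝ ι}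
    (hu : u ∈ cornerSimplex ι)
    (hobtuse : ∀ v ∈ insert 0 ((fun i => single i 1) '' {L}ᶜ),
      inner ℝ (single L 1 - u) (v - u) ≤ 0) :
    hausdorffDist (cornerSimplex ι) (replaceVertex L u) = ‖single L 1 - u‖ := by
  have hbdd : Bornology.IsBounded (cornerSimplex ι) :=
    isBounded_closedBall.subset fun x hx =>
      mem_closedBall_zero_iff.2 (norm_le_one_of_mem_cornerSimplex hx)
  refine Metric.hausdorffDist_eq_of_subset_s9 hbdd (replaceVertex_subset_cornerSimplex hu)
    (subset_convexHull ℝ _ (mem_insert_of_mem _ (mem_range_self L)))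
    (fun x hx => ⟨_, vertexRetraction_image_cornerSimplex_subset L u ⟨x, hx, rfl⟩,
      dist_vertexRetraction_le hx⟩)
    (fun y hy => norm_sub_le_dist_of_mem_convexHull ?_ hy)
  rintro v (rfl | rfl | hv)
  exacts [hobtuse 0 (mem_insert _ _), by simp, hobtuse v (mem_insert_of_mem _ hv)]

end CornerSimplex

section TiltedPoint

open EuclideanSpace (single)

variable {ι : Type*} [Fintype ι] [DecidableEq ι] {L : ι} {ε : ℝ}

def tiltedPoint (L : ι) (ε : ℝ) : EuclideanSpace ℝ ι :=
  WithLp.toLp 2 fun i => if i = L then 2 * ε else ε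

theorem pos_of_add_two_mul_eq_one {n : ℝ} (hn : 0 ≤ n) (hε : (n + 2) * ε = 1) : 0 < ε :=
  pos_of_mul_pos_right (hε.ge.trans_lt' one_pos) (by positivity)

theorem tiltedPoint_mem_cornerSimplex (hε : (Fintype.card ι + 2) * ε = 1) :
    tiltedPoint L ε ∈ cornerSimplex ι := by
  have hpos := pos_of_add_two_mul_eq_one (Nat.cast_nonneg _) hε
  refine toLp_mem_cornerSimplex (fun i => by split_ifs <;> positivity) ?_
  rw [Fintype.sum_ite_eq_card_mul_add]
  linarith

theorem inner_single_sub_tiltedPoint_nonpos (hε : (Fintype.card ι + 2) * ε = 1)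
    {v : EuclideanSpace ℝ ι} (hv : v ∈ insert 0 ((fun i => single i 1) '' {L}ᶜ)) :
    inner ℝ (single L 1 - tiltedPoint L ε) (v - tiltedPoint L ε) ≤ 0 := by
  have hpos := pos_of_add_two_mul_eq_one (Nat.cast_nonneg _) hε
  have hzero : inner ℝ (single L 1 - tiltedPoint L ε) (0 - tiltedPoint L ε) = ε * (ε - 1) := by
    have hcoord : ∀ i, inner ℝ ((single L 1 - tiltedPoint L ε : EuclideanSpace ℝ ι) i)
        ((0 - tiltedPoint L ε : EuclideanSpace ℝ ι) i) =
          if i = L then -2 * ε * (1 - 2 * ε) else ε ^ 2 := by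
      intro i
      by_cases h : i = L <;> simp [tiltedPoint, h]
    rw [PiLp.inner_apply, Finset.sum_congr rfl fun i _ => hcoord i,
      Fintype.sum_ite_eq_card_mul_add]
    linear_combination ε * hε
  obtain rfl | ⟨i, hi : i ≠ L, rfl⟩ := hv
  · rw [hzero]
    nlinarith
  · dsimp only
    rw [sub_eq_add_neg (single i 1), ← zero_sub, inner_add_right, hzero,
      EuclideanSpace.inner_single_right]
    simp [tiltedPoint, hi]
    nlinarith

theorem norm_single_sub_tiltedPoint (hε : (Fintype.card ι + 2) * ε = 1) :
    ‖single L 1 - tiltedPoint L ε‖ = ε * √((Fintype.card ι) ^ 2 + Fintype.card ι - 1) := by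
  have hpos := pos_of_add_two_mul_eq_one (Nat.cast_nonneg _) hε
  have hcoord : ∀ i, ‖(single L 1 - tiltedPoint L ε : EuclideanSpace ℝ ι) i‖ ^ 2 =
      if i = L then (1 - 2 * ε) ^ 2 else ε ^ 2 := by
    intro i
    by_cases h : i = L <;> simp [tiltedPoint, h]
  have hsqrt : ε * √((Fintype.card ι) ^ 2 + Fintype.card ι - 1) =
      √(ε ^ 2 * ((Fintype.card ι) ^ 2 + Fintype.card ι - 1)) := by
    rw [Real.sqrt_mul (sq_nonneg ε), Real.sqrt_sq hpos.le]
  rw [EuclideanSpace.norm_eq, Finset.sum_congr rfl fun i _ => hcoord i,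
    Fintype.sum_ite_eq_card_mul_add, hsqrt]
  congr 1
  linear_combination (-(1 - 2 * ε + Fintype.card ι * ε)) * hε

end TiltedPoint

/-- tightness of the bound ε√(q²+q−1) for the primal algorithm (Example 3.2). -/
theorem stmt_9 (q : ℕ) (hq : 2 ≤ q) (ε : ℝ) (hε : ε = 1 / ((q : ℝ) + 2))
    (u : EuclideanSpace ℝ (Fin q))
    (hu : u = euc fun i => if (i : ℕ) = q - 1 then 2 / ((q : ℝ) + 2) else 1 / ((q : ℝ) + 2))
    (Y Youter : Set (EuclideanSpace ℝ (Fin q)))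
    (hY : Y = convexHull ℝ
      (insert 0 (insert u {y | ∃ i : Fin q, (i : ℕ) < q - 1 ∧ y = euc (Pi.single i 1)})))
    (hYo : Youter = convexHull ℝ (insert 0 {y | ∃ i : Fin q, y = euc (Pi.single i 1)})) :
    Y ⊆ Youter ∧
    Metric.hausdorffDist Youter Y = ‖euc (Pi.single (⟨q - 1, by omega⟩ : Fin q) 1) - u‖ ∧
    Metric.hausdorffDist Youter Y = ε * Real.sqrt ((q : ℝ) ^ 2 + q - 1) := by
  set L : Fin q := ⟨q - 1, by omega⟩
  have hL : ∀ i : Fin q, (i : ℕ) = q - 1 ↔ i = L := fun i => by simp [L, Fin.ext_iff]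
  have hε' : (Fintype.card (Fin q) + 2) * ε = 1 := by
    rw [Fintype.card_fin, hε]
    field_simp
  have hu' : u = tiltedPoint L ε := by
    ext i
    simp only [hu, euc, tiltedPoint, hL, hε]
    split_ifs <;> ring
  have hlt : ∀ i : Fin q, (i : ℕ) < q - 1 ↔ i ≠ L := fun i => by
    rw [Ne, ← hL]
    omega
  have hYo' : Youter = cornerSimplex (Fin q) := by
    simp only [hYo, cornerSimplex, euc, PiLp.toLp_single, range, eq_comm]
  have hY' : Y = replaceVertex L u := by
    simp only [hY, replaceVertex, euc, PiLp.toLp_single, hlt, image, mem_compl_singleton_iff,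
      eq_comm]
  have hmem := tiltedPoint_mem_cornerSimplex (L := L) hε'
  have hdist := hausdorffDist_cornerSimplex_replaceVertex hmem
    fun _ => inner_single_sub_tiltedPoint_nonpos hε'
  rw [hY', hYo', hu']
  refine ⟨replaceVertex_subset_cornerSimplex hmem, hdist, ?_⟩
  rw [hdist, norm_single_sub_tiltedPoint hε', Fintype.card_fin]
end
end

section
/- Let q ≥ 1, n ≥ 1, let G be a real q×n matrix, let X ⊆ ℝⁿ be nonempty and compact, and define Γ(x) = (Gx, −eᵀGx) and P := Γ[X] + ℝ₊^{q+1}. Define the lower image D := {(t₁, …, t_q, s) ∈ ℝ^{q+1} : w(t) ≥ 0 and s ≤ inf_{x ∈ X} w(t)ᵀΓ(x)}, where t = (t₁, …, t_q) and w(t) := (t₁, …, t_q, 1 − ∑_{i=1}^q tᵢ). Then weak duality holds: for every y ∈ P and every y* ∈ D, φ(y, y*) ≥ 0. -/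
/-!
Writing `w` for the weight `w(t)`, the coupling is `φ(y, y*) = wᵀy - y*_{q+1}`. For
`y = Γ(x) + z` with `z ≥ 0`, nonnegativity of `w` gives `wᵀy ≥ wᵀΓ(x)`, and
`wᵀΓ(x) ≥ inf_X wᵀΓ ≥ y*_{q+1}`. Compactness of `X` is what makes the infimum a genuine
lower bound: a real `⨅` over a set that is not bounded below is `0` in Lean.
-/

noncomputable section
open Pointwise

/-- The weight `w(t)` of the paper, where `t` is the vector of the first `q` coordinates
of `ys`. -/
def dualWeight {q : ℕ} (ys : EuclideanSpace ℝ (Fin (q + 1))) : Fin (q + 1) → ℝ :=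
  Fin.snoc (fun i => ys i.castSucc) (1 - ∑ i : Fin q, ys i.castSucc)

section DualWeight

variable {q : ℕ} (ys : EuclideanSpace ℝ (Fin (q + 1)))

lemma dualWeight_nonneg (hys : ∀ i : Fin q, 0 ≤ ys i.castSucc)
    (hsum : ∑ i : Fin q, ys i.castSucc ≤ 1) (i : Fin (q + 1)) : 0 ≤ dualWeight ys i := by
  induction i using Fin.lastCases with
  | last => simpa [dualWeight] using hsum
  | cast i => simpa [dualWeight] using hys i

lemma sum_dualWeight_mul (y : EuclideanSpace ℝ (Fin (q + 1))) :
    ∑ i, dualWeight ys i * y i =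
      (∑ i : Fin q, ys i.castSucc * y i.castSucc) +
        (1 - ∑ i : Fin q, ys i.castSucc) * y (Fin.last q) := by
  simp [Fin.sum_univ_castSucc, dualWeight]

lemma phi_eq_sum_dualWeight_mul_sub (y : EuclideanSpace ℝ (Fin (q + 1))) :
    phi y ys = ∑ i, dualWeight ys i * y i - ys (Fin.last q) := by
  rw [sum_dualWeight_mul, phi]
  simp only [mul_comm]

end DualWeight

lemma sum_mul_le_sum_mul_add_of_mem_orth {m : ℕ} {w : Fin m → ℝ} (hw : ∀ i, 0 ≤ w i)
    (a : EuclideanSpace ℝ (Fin m)) {z : EuclideanSpace ℝ (Fin m)} (hz : z ∈ orth m) :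
    ∑ i, w i * a i ≤ ∑ i, w i * (a + z) i :=
  Finset.sum_le_sum fun i _ => by
    rw [PiLp.add_apply, mul_add]
    exact le_add_of_nonneg_right (mul_nonneg (hw i) (hz i))

lemma continuous_Gam_apply {q n : ℕ} (G : Matrix (Fin q) (Fin n) ℝ) (i : Fin (q + 1)) :
    Continuous fun x => Gam G x i := by
  unfold Gam euc
  fun_prop

lemma iInf_le_of_isCompact {α : Type*} [TopologicalSpace α] {X : Set α} (hX : IsCompact X)
    {f : α → ℝ} (hf : Continuous f) {x : α} (hx : x ∈ X) : ⨅ x' : X, f x' ≤ f x := by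
  refine ciInf_le ?_ (⟨x, hx⟩ : X)
  rw [← Set.image_eq_range]
  exact (hX.image hf).bddBelow

theorem stmt_10_general (q n : ℕ)
    (G : Matrix (Fin q) (Fin n) ℝ) (X : Set (Fin n → ℝ))
    (hXc : IsCompact X)
    (D : Set (EuclideanSpace ℝ (Fin (q + 1))))
    (hD : D = {ys | (∀ i : Fin q, 0 ≤ ys i.castSucc) ∧ (∑ i : Fin q, ys i.castSucc) ≤ 1 ∧
      ys (Fin.last q) ≤ ⨅ x : X, ((∑ i : Fin q, ys i.castSucc * Gam G x.1 i.castSucc) +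
        (1 - ∑ i : Fin q, ys i.castSucc) * Gam G x.1 (Fin.last q))}) :
    ∀ y ∈ (Gam G '' X) + orth (q + 1), ∀ ys ∈ D, 0 ≤ phi y ys := by
  rintro _ ⟨_, ⟨x, hx, rfl⟩, z, hz, rfl⟩ ys hys
  subst hD
  obtain ⟨hys_nonneg, hys_sum, hys_le⟩ := hys
  simp only [← sum_dualWeight_mul] at hys_le
  have hcont : Continuous fun x => ∑ i, dualWeight ys i * Gam G x i :=
    continuous_finsetSum _ fun i _ => continuous_const.mul (continuous_Gam_apply G i)
  rw [phi_eq_sum_dualWeight_mul_sub, sub_nonneg]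
  calc ys (Fin.last q)
      ≤ ∑ i, dualWeight ys i * Gam G x i := hys_le.trans (iInf_le_of_isCompact hXc hcont hx)
    _ ≤ ∑ i, dualWeight ys i * (Gam G x + z) i :=
      sum_mul_le_sum_mul_add_of_mem_orth (dualWeight_nonneg ys hys_nonneg hys_sum) _ hz

/-- weak duality between the upper image P and the lower image D. -/
theorem stmt_10 (q n : ℕ) (hq : 1 ≤ q) (hn : 1 ≤ n)
    (G : Matrix (Fin q) (Fin n) ℝ) (X : Set (Fin n → ℝ))
    (hX : X.Nonempty) (hXc : IsCompact X)
    (D : Set (EuclideanSpace ℝ (Fin (q + 1))))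
    (hD : D = {ys | (∀ i : Fin q, 0 ≤ ys i.castSucc) ∧ (∑ i : Fin q, ys i.castSucc) ≤ 1 ∧
      ys (Fin.last q) ≤ ⨅ x : X, ((∑ i : Fin q, ys i.castSucc * Gam G x.1 i.castSucc) +
        (1 - ∑ i : Fin q, ys i.castSucc) * Gam G x.1 (Fin.last q))}) :
    ∀ y ∈ (Gam G '' X) + orth (q + 1), ∀ ys ∈ D, 0 ≤ phi y ys :=
  stmt_10_general q n G X hXc D hD
end
end

section
/- Let q ≥ 1, n ≥ 1, let G be a real q×n matrix, let X ⊆ ℝⁿ be nonempty and compact, and define Γ(x) = (Gx, −eᵀGx), P := Γ[X] + ℝ₊^{q+1}, and the lower image D := {(t₁, …, t_q, s) ∈ ℝ^{q+1} : w(t) ≥ 0 and s ≤ inf_{x ∈ X} w(t)ᵀΓ(x)}. Let ε > 0 and let D_outer ⊆ ℝ^{q+1} be a set satisfying D_outer − {ε e^{q+1}} ⊆ D, where e^{q+1} is the last standard unit vector of ℝ^{q+1}. Define P_inner := {y ∈ ℝ^{q+1} : φ(y, y*) ≥ 0 for all y* ∈ D_outer}. Then P + {εe} ⊆ P_inner.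 -/
/-!
Since the weight vector `w(t)` has coordinate sum `1`, shifting `y` by `ε e` raises `φ(y, y*)` by
`ε`, exactly as lowering the last coordinate of `y*` by `ε` does. So for `y = Γ(x) + r + ε e` and
`y* ∈ D_outer`, `φ(y, y*) = φ(Γ(x) + r, y* - ε e^{q+1})` with `y* - ε e^{q+1} ∈ D`, and this is
nonnegative by weak duality: `w(t) ≥ 0` makes `w(t)ᵀ r ≥ 0`, and `y*_{q+1} ≤ w(t)ᵀ Γ(x)` because
the infimum defining `D` is over a continuous function on a compact set, hence bounded below
(otherwise `⨅` would be the junk value `0`).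
-/

noncomputable section
open Pointwise

section

variable {q : ℕ}

/-- `weightDot ys y` is the paper's `w(t)ᵀ y`, where `t` consists of the first `q` coordinates
of `ys`. -/
def weightDot (ys y : EuclideanSpace ℝ (Fin (q + 1))) : ℝ :=
  (∑ i : Fin q, ys i.castSucc * y i.castSucc) +
    (1 - ∑ i : Fin q, ys i.castSucc) * y (Fin.last q)

def lowerImage {n : ℕ} (G : Matrix (Fin q) (Fin n) ℝ) (X : Set (Fin n → ℝ)) :
    Set (EuclideanSpace ℝ (Fin (q + 1))) :=
  {ys | (∀ i : Fin q, 0 ≤ ys i.castSucc) ∧ (∑ i : Fin q, ys i.castSucc) ≤ 1 ∧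
    ys (Fin.last q) ≤ ⨅ x : X, weightDot ys (Gam G x)}

theorem phi_eq_weightDot_sub (y ys : EuclideanSpace ℝ (Fin (q + 1))) :
    phi y ys = weightDot ys y - ys (Fin.last q) := by
  simp only [phi, weightDot, mul_comm (y _)]

theorem weightDot_add (ys y z : EuclideanSpace ℝ (Fin (q + 1))) :
    weightDot ys (y + z) = weightDot ys y + weightDot ys z := by
  simp only [weightDot, PiLp.add_apply, mul_add, Finset.sum_add_distrib]
  ring

theorem weightDot_const (ys : EuclideanSpace ℝ (Fin (q + 1))) (c : ℝ) :
    weightDot ys (euc fun _ => c) = c := by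
  simp only [weightDot, euc, PiLp.toLp_apply, ← Finset.sum_mul]
  ring

theorem weightDot_sub_single_last (ys y : EuclideanSpace ℝ (Fin (q + 1))) (c : ℝ) :
    weightDot (ys - euc (Pi.single (Fin.last q) c)) y = weightDot ys y := by
  simp [weightDot, euc, (Fin.castSucc_lt_last _).ne]

theorem weightDot_nonneg {ys y : EuclideanSpace ℝ (Fin (q + 1))}
    (hys : ∀ i : Fin q, 0 ≤ ys i.castSucc) (hsum : ∑ i : Fin q, ys i.castSucc ≤ 1)
    (hy : y ∈ orth (q + 1)) : 0 ≤ weightDot ys y :=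
  add_nonneg (Finset.sum_nonneg fun i _ => mul_nonneg (hys i) (hy _))
    (mul_nonneg (sub_nonneg.2 hsum) (hy _))

theorem phi_add_const (y ys : EuclideanSpace ℝ (Fin (q + 1))) (c : ℝ) :
    phi (y + euc fun _ => c) ys = phi y (ys - euc (Pi.single (Fin.last q) c)) := by
  rw [phi_eq_weightDot_sub, phi_eq_weightDot_sub, weightDot_add, weightDot_const,
    weightDot_sub_single_last]
  simp only [euc, PiLp.toLp_single, PiLp.sub_apply, PiLp.single_eq_same]
  ring

theorem continuous_Gam {n : ℕ} (G : Matrix (Fin q) (Fin n) ℝ) : Continuous (Gam G) :=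
  (PiLp.continuous_toLp 2 _).comp ((G.mulVecLin.continuous_of_finiteDimensional).finSnoc
    (continuous_finsetSum _ fun j _ => (continuous_apply j).comp
      G.mulVecLin.continuous_of_finiteDimensional).neg)

theorem continuous_weightDot (ys : EuclideanSpace ℝ (Fin (q + 1))) :
    Continuous (weightDot ys) := by
  unfold weightDot; fun_prop

end

theorem IsCompact.le_of_le_iInf {α : Type*} [TopologicalSpace α] {X : Set α} (hX : IsCompact X)
    {f : α → ℝ} (hf : ContinuousOn f X) {s : ℝ} (hs : s ≤ ⨅ x : X, f x) {x : α} (hx : x ∈ X) :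
    s ≤ f x :=
  hs.trans (ciInf_le (Set.image_eq_range f X ▸ hX.bddBelow_image hf) ⟨x, hx⟩)

theorem phi_nonneg_of_mem_lowerImage {q n : ℕ} {G : Matrix (Fin q) (Fin n) ℝ}
    {X : Set (Fin n → ℝ)} (hX : IsCompact X) {x : Fin n → ℝ} (hx : x ∈ X)
    {r : EuclideanSpace ℝ (Fin (q + 1))} (hr : r ∈ orth (q + 1))
    {ys : EuclideanSpace ℝ (Fin (q + 1))} (hys : ys ∈ lowerImage G X) :
    0 ≤ phi (Gam G x + r) ys := by
  obtain ⟨hpos, hsum, hlast⟩ := hys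
  have hGx : ys (Fin.last q) ≤ weightDot ys (Gam G x) :=
    hX.le_of_le_iInf ((continuous_weightDot ys).comp (continuous_Gam G)).continuousOn hlast hx
  rw [phi_eq_weightDot_sub, weightDot_add]
  linarith [weightDot_nonneg hpos hsum hr]

theorem stmt_11_general (q n : ℕ)
    (G : Matrix (Fin q) (Fin n) ℝ) (X : Set (Fin n → ℝ))
    (hXc : IsCompact X)
    (ε : ℝ)
    (D Douter Pinner : Set (EuclideanSpace ℝ (Fin (q + 1))))
    (hD : D = {ys | (∀ i : Fin q, 0 ≤ ys i.castSucc) ∧ (∑ i : Fin q, ys i.castSucc) ≤ 1 ∧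
      ys (Fin.last q) ≤ ⨅ x : X, ((∑ i : Fin q, ys i.castSucc * Gam G x.1 i.castSucc) +
        (1 - ∑ i : Fin q, ys i.castSucc) * Gam G x.1 (Fin.last q))})
    (hDo : Douter - {euc (Pi.single (Fin.last q) ε)} ⊆ D)
    (hPi : Pinner = {y | ∀ ys ∈ Douter, 0 ≤ phi y ys}) :
    ((Gam G '' X) + orth (q + 1)) + {euc fun _ => ε} ⊆ Pinner := by
  rintro _ ⟨_, ⟨_, ⟨x, hx, rfl⟩, r, hr, rfl⟩, _, rfl, rfl⟩
  rw [hPi]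
  intro ys hys
  beta_reduce
  have hmem : ys - euc (Pi.single (Fin.last q) ε) ∈ lowerImage G X := by
    have h := hDo (Set.sub_mem_sub hys rfl)
    rwa [hD] at h
  rw [phi_add_const]
  exact phi_nonneg_of_mem_lowerImage hXc hx hr hmem

/-- stopping criterion of the dual Benson algorithm yields P + {εe} ⊆ P_inner. -/
theorem stmt_11 (q n : ℕ) (hq : 1 ≤ q) (hn : 1 ≤ n)
    (G : Matrix (Fin q) (Fin n) ℝ) (X : Set (Fin n → ℝ))
    (hX : X.Nonempty) (hXc : IsCompact X)
    (ε : ℝ) (hε : 0 < ε)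
    (D Douter Pinner : Set (EuclideanSpace ℝ (Fin (q + 1))))
    (hD : D = {ys | (∀ i : Fin q, 0 ≤ ys i.castSucc) ∧ (∑ i : Fin q, ys i.castSucc) ≤ 1 ∧
      ys (Fin.last q) ≤ ⨅ x : X, ((∑ i : Fin q, ys i.castSucc * Gam G x.1 i.castSucc) +
        (1 - ∑ i : Fin q, ys i.castSucc) * Gam G x.1 (Fin.last q))})
    (hDo : Douter - {euc (Pi.single (Fin.last q) ε)} ⊆ D)
    (hPi : Pinner = {y | ∀ ys ∈ Douter, 0 ≤ phi y ys}) :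
    ((Gam G '' X) + orth (q + 1)) + {euc fun _ => ε} ⊆ Pinner :=
  stmt_11_general q n G X hXc ε D Douter Pinner hD hDo hPi
end
end

section
/- Let q ≥ 1. For i ∈ {1, …, q+1} define xⁱ := (1/i) ∑_{j=1}^i e^j ∈ ℝ^{q+1}, and for ε > 0 define x⁰(ε) := (1/(q+1)) ∑_{i=1}^{q+1} xⁱ − εe. Let P_inner := conv{x¹, …, x^{q+1}} + ℝ₊^{q+1} and P(ε) := conv{x⁰(ε), x¹, …, x^{q+1}} + ℝ₊^{q+1}. Then there exists ε₀ > 0 such that for all ε ∈ (0, ε₀): P_inner ⊆ P(ε) and d_H(P_inner, P(ε)) = ε√(q+1). In particular, the bound d_H(P_inner, P) ≤ ε√(q+1) for inner approximations of upper images of multiobjective convex programs is tight. -/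
noncomputable section
open Pointwise

/-! The all-ones vector `e` gives a linear functional `⟪e, ·⟫` that equals `1` on every `xⁱ`, hence
on their hull, and is nonnegative on the orthant, so it is at least `1` on `P_inner`; at `x⁰(ε)` it
is `1 - ε‖e‖²`, which by Cauchy–Schwarz puts `x⁰(ε)` at distance at least `ε‖e‖` from `P_inner`.
Conversely, `x⁰(ε) + εe` is the barycenter of the `xⁱ`, so translating the `x⁰`-part of a convex
combination by `εe` moves any point of `P(ε)` into `P_inner` by a step of length at most `ε‖e‖`.
Since `P_inner ⊆ P(ε)`, the symmetric `Metric.hausdorffDist` agrees with the one-sided `d_H`. -/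

open RealInnerProductSpace

theorem Metric.hausdorffDist_eq_of_subset_s13 {X : Type*} [MetricSpace X] {A B : Set X} {r : ℝ}
    {b₀ : X} (hAB : A ⊆ B) (hB : ∀ b ∈ B, ∃ a ∈ A, dist a b ≤ r) (hb₀ : b₀ ∈ B)
    (hfar : ∀ a ∈ A, r ≤ dist b₀ a) : hausdorffDist A B = r := by
  obtain ⟨a₀, ha₀, hd₀⟩ := hB b₀ hb₀
  have hr : 0 ≤ r := dist_nonneg.trans hd₀
  have hA : ∀ a ∈ A, ∃ b ∈ B, dist a b ≤ r := fun a ha => ⟨a, hAB ha, by simpa using hr⟩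
  have hBA : ∀ b ∈ B, ∃ a ∈ A, dist b a ≤ r := fun b hb => by
    simpa only [dist_comm] using hB b hb
  refine le_antisymm (hausdorffDist_le_of_mem_dist hr hA hBA) ?_
  have hfin : hausdorffEDist B A ≠ ⊤ :=
    (hausdorffEDist_le_of_mem_edist (r := ENNReal.ofReal r)
      (fun b hb => (hBA b hb).imp fun _ ⟨ha, h⟩ => ⟨ha, edist_le_ofReal hr |>.2 h⟩)
      (fun a ha => (hA a ha).imp fun _ ⟨hb, h⟩ => ⟨hb, edist_le_ofReal hr |>.2 h⟩)).trans_lt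
      ENNReal.ofReal_lt_top |>.ne
  rw [hausdorffDist_comm]
  exact (le_infDist ⟨a₀, ha₀⟩).2 hfar |>.trans (infDist_le_hausdorffDist_of_mem hb₀ hfin)

section Convex

variable {F : Type*} [NormedAddCommGroup F]

theorem exists_dist_le_of_mem_convexHull_insert_add [NormedSpace ℝ F] {S K : Set F}
    {x v b : F} (hxv : x + v ∈ convexHull ℝ S) (hb : b ∈ convexHull ℝ (insert x S) + K) :
    ∃ a ∈ convexHull ℝ S + K, dist a b ≤ ‖v‖ := by
  have hS : S.Nonempty := convexHull_nonempty_iff.1 ⟨_, hxv⟩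
  obtain ⟨c, hc, k, hk, rfl⟩ := hb
  rw [convexHull_insert hS, convexJoin_singleton_left, Set.mem_iUnion₂] at hc
  obtain ⟨z, hz, t, u, ht, hu, htu, rfl⟩ := hc
  refine ⟨t • (x + v) + u • z + k, ⟨_, (convex_convexHull ℝ S) hxv hz ht hu htu, k, hk, rfl⟩, ?_⟩
  calc dist (t • (x + v) + u • z + k) (t • x + u • z + k) = t * ‖v‖ := by
        rw [dist_eq_norm, show t • (x + v) + u • z + k - (t • x + u • z + k) = t • v by module,
          norm_smul, Real.norm_of_nonneg ht]
    _ ≤ ‖v‖ := mul_le_of_le_one_left (norm_nonneg v) (by linarith)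

variable [InnerProductSpace ℝ F]

theorem mul_norm_le_dist_of_le_inner {w x a : F} {ε : ℝ}
    (h : ε * ‖w‖ ^ 2 ≤ ⟪w, a - x⟫) : ε * ‖w‖ ≤ dist x a := by
  rcases eq_or_ne w 0 with rfl | hw
  · simp
  have hpos : 0 < ‖w‖ := norm_pos_iff.2 hw
  rw [dist_eq_norm']
  refine le_of_mul_le_mul_left ?_ hpos
  calc ‖w‖ * (ε * ‖w‖) = ε * ‖w‖ ^ 2 := by ring
    _ ≤ ⟪w, a - x⟫ := h
    _ ≤ ‖w‖ * ‖a - x‖ := real_inner_le_norm _ _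

theorem inner_eq_of_mem_convexHull {S : Set F} {w b : F} {c : ℝ} (hS : ∀ s ∈ S, ⟪w, s⟫ = c)
    (hb : b ∈ convexHull ℝ S) : ⟪w, b⟫ = c :=
  convexHull_min hS (convex_hyperplane (innerₛₗ ℝ w).isLinear c) hb

theorem le_inner_of_mem_convexHull_add {S K : Set F} {w a : F} {c : ℝ}
    (hS : ∀ s ∈ S, ⟪w, s⟫ = c) (hK : ∀ k ∈ K, 0 ≤ ⟪w, k⟫) (ha : a ∈ convexHull ℝ S + K) :
    c ≤ ⟪w, a⟫ := by
  obtain ⟨s, hs, k, hk, rfl⟩ := ha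
  rw [inner_add_right, inner_eq_of_mem_convexHull hS hs]
  linarith [hK k hk]

theorem hausdorffDist_convexHull_insert_add {S K : Set F} {w b : F} {c ε : ℝ}
    (hS : ∀ s ∈ S, ⟪w, s⟫ = c) (hK : ∀ k ∈ K, 0 ≤ ⟪w, k⟫) (hK₀ : (0 : F) ∈ K)
    (hb : b ∈ convexHull ℝ S) (hε : 0 ≤ ε) :
    Metric.hausdorffDist (convexHull ℝ S + K) (convexHull ℝ (insert (b - ε • w) S) + K) =
      ε * ‖w‖ := by
  refine Metric.hausdorffDist_eq_of_subset_s13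
    (Set.add_subset_add_right (convexHull_mono (Set.subset_insert _ _))) (fun y hy => ?_)
    ⟨_, subset_convexHull ℝ _ (Set.mem_insert _ _), 0, hK₀, add_zero _⟩ (fun a ha => ?_)
  · obtain ⟨a, ha, hd⟩ := exists_dist_le_of_mem_convexHull_insert_add
      (v := ε • w) (by rwa [sub_add_cancel]) hy
    exact ⟨a, ha, hd.trans_eq (by rw [norm_smul, Real.norm_of_nonneg hε])⟩
  · refine mul_norm_le_dist_of_le_inner ?_
    rw [inner_sub_right, inner_sub_right, inner_eq_of_mem_convexHull hS hb, real_inner_smul_right,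
      real_inner_self_eq_norm_sq]
    linarith [le_inner_of_mem_convexHull_add hS hK ha]

end Convex

def ones (n : ℕ) : EuclideanSpace ℝ (Fin n) := euc fun _ => 1

theorem inner_ones {n : ℕ} (y : EuclideanSpace ℝ (Fin n)) : ⟪ones n, y⟫ = ∑ i, y i := by
  simp [PiLp.inner_apply, ones, euc]

theorem norm_ones (n : ℕ) : ‖ones n‖ = Real.sqrt n := by
  simp [EuclideanSpace.norm_eq, ones, euc]

theorem zero_mem_orth (n : ℕ) : (0 : EuclideanSpace ℝ (Fin n)) ∈ orth n := fun _ => le_rfl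

theorem inner_ones_nonneg_of_mem_orth {n : ℕ} {y : EuclideanSpace ℝ (Fin n)} (hy : y ∈ orth n) :
    0 ≤ ⟪ones n, y⟫ := by
  rw [inner_ones]
  exact Finset.sum_nonneg fun i _ => hy i

theorem sum_ite_lt_one_div {n m : ℕ} (hm : 0 < m) (hmn : m ≤ n) :
    ∑ k : Fin n, (if (k : ℕ) < m then 1 / (m : ℝ) else 0) = 1 := by
  have hfilter : (Finset.range n).filter (· < m) = Finset.range m := by
    ext j
    simp only [Finset.mem_filter, Finset.mem_range]
    omega
  rw [Fin.sum_univ_eq_sum_range (fun j => if j < m then 1 / (m : ℝ) else 0), ← Finset.sum_filter,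
    hfilter, Finset.sum_const, Finset.card_range, nsmul_eq_mul, mul_one_div,
    div_self (Nat.cast_ne_zero.2 hm.ne')]

theorem stmt_13_general (q : ℕ)
    (xi : ℕ → EuclideanSpace ℝ (Fin (q + 1)))
    (hxi : ∀ m, xi m = euc fun k => if (k : ℕ) < m then 1 / (m : ℝ) else 0)
    (x0 : ℝ → EuclideanSpace ℝ (Fin (q + 1)))
    (hx0 : ∀ ε, x0 ε = euc fun k =>
      (1 / ((q : ℝ) + 1)) * ∑ m ∈ Finset.Icc 1 (q + 1), xi m k - ε)
    (Pinner : Set (EuclideanSpace ℝ (Fin (q + 1))))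
    (hPinner : Pinner =
      convexHull ℝ {y | ∃ m ∈ Finset.Icc 1 (q + 1), y = xi m} + orth (q + 1))
    (P : ℝ → Set (EuclideanSpace ℝ (Fin (q + 1))))
    (hP : ∀ ε, P ε =
      convexHull ℝ (insert (x0 ε) {y | ∃ m ∈ Finset.Icc 1 (q + 1), y = xi m}) + orth (q + 1)) :
    ∃ ε₀ > 0, ∀ ε : ℝ, 0 < ε → ε < ε₀ →
      Pinner ⊆ P ε ∧
      Metric.hausdorffDist Pinner (P ε) = ε * Real.sqrt ((q : ℝ) + 1) := by
  refine ⟨1, one_pos, fun ε hε _ => ?_⟩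
  set S := {y | ∃ m ∈ Finset.Icc 1 (q + 1), y = xi m}
  have hS : ∀ s ∈ S, ⟪ones (q + 1), s⟫ = 1 := by
    rintro _ ⟨m, hm, rfl⟩
    rw [Finset.mem_Icc] at hm
    rw [inner_ones, hxi]
    exact sum_ite_lt_one_div hm.1 hm.2
  have hweights : ∑ _m ∈ Finset.Icc 1 (q + 1), 1 / ((q : ℝ) + 1) = 1 := by
    simp only [Finset.sum_const, Nat.card_Icc, add_tsub_cancel_right, nsmul_eq_mul, Nat.cast_succ]
    field_simp
  set b := ∑ m ∈ Finset.Icc 1 (q + 1), (1 / ((q : ℝ) + 1)) • xi m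
  have hb : b ∈ convexHull ℝ S := (convex_convexHull ℝ S).sum_mem (fun _ _ => by positivity)
    hweights fun m hm => subset_convexHull ℝ S ⟨m, hm, rfl⟩
  have hx0 : x0 ε = b - ε • ones (q + 1) := by
    ext k
    simp [hx0, b, ones, euc, Finset.mul_sum]
  rw [hPinner, hP, hx0]
  refine ⟨Set.add_subset_add_right (convexHull_mono (Set.subset_insert _ _)), ?_⟩
  rw [hausdorffDist_convexHull_insert_add hS (fun _ => inner_ones_nonneg_of_mem_orth)
    (zero_mem_orth _) hb hε.le, norm_ones, Nat.cast_succ]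

/-- tightness of the bound ε√(q+1) for the dual algorithm (Example 4.1). -/
theorem stmt_13 (q : ℕ) (hq : 1 ≤ q)
    (xi : ℕ → EuclideanSpace ℝ (Fin (q + 1)))
    (hxi : ∀ m, xi m = euc fun k => if (k : ℕ) < m then 1 / (m : ℝ) else 0)
    (x0 : ℝ → EuclideanSpace ℝ (Fin (q + 1)))
    (hx0 : ∀ ε, x0 ε = euc fun k =>
      (1 / ((q : ℝ) + 1)) * ∑ m ∈ Finset.Icc 1 (q + 1), xi m k - ε)
    (Pinner : Set (EuclideanSpace ℝ (Fin (q + 1))))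
    (hPinner : Pinner =
      convexHull ℝ {y | ∃ m ∈ Finset.Icc 1 (q + 1), y = xi m} + orth (q + 1))
    (P : ℝ → Set (EuclideanSpace ℝ (Fin (q + 1))))
    (hP : ∀ ε, P ε =
      convexHull ℝ (insert (x0 ε) {y | ∃ m ∈ Finset.Icc 1 (q + 1), y = xi m}) + orth (q + 1)) :
    ∃ ε₀ > 0, ∀ ε : ℝ, 0 < ε → ε < ε₀ →
      Pinner ⊆ P ε ∧
      Metric.hausdorffDist Pinner (P ε) = ε * Real.sqrt ((q : ℝ) + 1) :=
  stmt_13_general q xi hxi x0 hx0 Pinner hPinner P hP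
end
end

section
/- Let q ≥ 1, ε = 1/(q+1), and let Δ := {x ∈ ℝ^q : x ≥ 0, eᵀx ≤ 1} be the standard simplex. Then the Hausdorff distance between the singleton {(1/(q+1))e} and Δ satisfies d_H({(1/(q+1))e}, Δ) = ‖e¹ − (1/(q+1))e‖₂ = ε√(q² + q − 1), where e¹ is the first standard unit vector of ℝ^q. In particular, the bound d_H(Y_inner, Y) ≤ ε√(q² + q − 1) for inner polyhedral approximations of convex projection problems is tight. -/
/-!
The Hausdorff distance from a point `c` to a set containing a point farthest from `c` is that
farthest distance. For `c = ε e` with `2ε ≤ 1` the vertex `e¹` of `Δ` is farthest: writing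
`s = ∑ xᵢ`, for `x ∈ Δ` we have `‖x - c‖² = ∑ xᵢ² - 2εs + qε² ≤ s² - 2εs + qε² ≤ 1 - 2ε + qε²`,
since `∑ xᵢ² ≤ s²` for `x ≥ 0` and `s ↦ s² - 2εs` is maximal on `[0, 1]` at `s = 1`.
With `ε = 1/(q+1)`, `1 - 2ε + qε² = ε²(q² + q - 1)`.
-/

noncomputable section
open Pointwise

open Metric Finset

theorem hausdorffDist_singleton_eq_of_forall_dist_le {α : Type*} [PseudoMetricSpace α]
    {s : Set α} {a c : α} (ha : a ∈ s) (hfar : ∀ x ∈ s, dist x c ≤ dist a c) :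
    hausdorffDist {c} s = dist a c := by
  refine le_antisymm
    (hausdorffDist_le_of_mem_dist dist_nonneg ?_ fun x hx => ⟨c, rfl, hfar x hx⟩) ?_
  · rintro x rfl
    exact ⟨a, ha, (dist_comm x a).le⟩
  · have hfin : hausdorffEDist s {c} ≠ ⊤ :=
      hausdorffEDist_ne_top_of_nonempty_of_bounded ⟨a, ha⟩ (Set.singleton_nonempty c)
        (isBounded_closedBall.subset hfar) Bornology.isBounded_singleton
    simpa only [infDist_singleton, hausdorffDist_comm] using infDist_le_hausdorffDist_of_mem ha hfin

section SumSq

variable {ι : Type*} [Fintype ι]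

theorem sum_sub_const_sq (v : ι → ℝ) (t : ℝ) :
    ∑ i, (v i - t) ^ 2 = ∑ i, v i ^ 2 - 2 * t * ∑ i, v i + Fintype.card ι * t ^ 2 := by
  simp only [sub_sq, sum_add_distrib, sum_sub_distrib, sum_const, card_univ, nsmul_eq_mul,
    ← sum_mul, ← mul_sum]
  ring

theorem sum_sub_const_sq_le {x : ι → ℝ} (hx0 : ∀ i, 0 ≤ x i) (hx1 : ∑ i, x i ≤ 1) {t : ℝ}
    (ht : 2 * t ≤ 1) :
    ∑ i, (x i - t) ^ 2 ≤ 1 - 2 * t + Fintype.card ι * t ^ 2 := by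
  have hsq : ∑ i, x i ^ 2 ≤ (∑ i, x i) ^ 2 := sum_sq_le_sq_sum_of_nonneg fun i _ => hx0 i
  have hsum : 0 ≤ ∑ i, x i := sum_nonneg fun i _ => hx0 i
  rw [sum_sub_const_sq]
  nlinarith [mul_nonneg (sub_nonneg.2 hx1) (by linarith : 0 ≤ 1 + ∑ i, x i - 2 * t)]

theorem sum_single_sub_const_sq [DecidableEq ι] (j : ι) (t : ℝ) :
    ∑ i, ((Pi.single j 1 : ι → ℝ) i - t) ^ 2 = 1 - 2 * t + Fintype.card ι * t ^ 2 := by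
  have hsq : ∑ i, (Pi.single j 1 : ι → ℝ) i ^ 2 = 1 := by
    simp [Pi.single_apply, apply_ite (· ^ 2)]
  rw [sum_sub_const_sq, hsq, sum_pi_single', if_pos (mem_univ j)]
  ring

end SumSq

theorem EuclideanSpace.dist_eq_sqrt_sum_sq {ι : Type*} [Fintype ι] (x y : EuclideanSpace ℝ ι) :
    dist x y = √(∑ i, (x i - y i) ^ 2) := by
  simp only [EuclideanSpace.dist_eq, Real.dist_eq, sq_abs]

theorem one_sub_two_mul_add_mul_sq_of_eq_inv {q ε : ℝ} (hε : ε = 1 / (q + 1)) (hq : q + 1 ≠ 0) :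
    1 - 2 * ε + q * ε ^ 2 = ε ^ 2 * (q ^ 2 + q - 1) := by
  subst hε
  field_simp
  ring

/-- tightness of the bound ε√(q²+q−1) for the dual algorithm (Example 4.2). -/
theorem stmt_15 (q : ℕ) (hq : 1 ≤ q) (ε : ℝ) (hε : ε = 1 / ((q : ℝ) + 1)) :
    Metric.hausdorffDist {euc fun _ : Fin q => 1 / ((q : ℝ) + 1)}
      {x : EuclideanSpace ℝ (Fin q) | (∀ i, 0 ≤ x i) ∧ ∑ i, x i ≤ 1}
      = ‖euc (Pi.single (⟨0, hq⟩ : Fin q) 1) - euc fun _ : Fin q => 1 / ((q : ℝ) + 1)‖ ∧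
    Metric.hausdorffDist {euc fun _ : Fin q => 1 / ((q : ℝ) + 1)}
      {x : EuclideanSpace ℝ (Fin q) | (∀ i, 0 ≤ x i) ∧ ∑ i, x i ≤ 1}
      = ε * Real.sqrt ((q : ℝ) ^ 2 + q - 1) := by
  have hq' : (1 : ℝ) ≤ q := by exact_mod_cast hq
  rw [← hε]
  have hε2 : 2 * ε ≤ 1 := by
    rw [hε, ← le_div_iff₀' two_pos, div_le_div_iff_of_pos_left one_pos] <;> linarith
  have hsingle : euc (Pi.single (⟨0, hq⟩ : Fin q) (1 : ℝ)) ∈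
      {x : EuclideanSpace ℝ (Fin q) | (∀ i, 0 ≤ x i) ∧ ∑ i, x i ≤ 1} :=
    ⟨fun i => (Pi.single_nonneg.2 zero_le_one : (0 : Fin q → ℝ) ≤ _) i, by simp [euc]⟩
  have hdist : dist (euc (Pi.single (⟨0, hq⟩ : Fin q) (1 : ℝ))) (euc fun _ : Fin q => ε)
      = √(1 - 2 * ε + q * ε ^ 2) := by
    simp only [EuclideanSpace.dist_eq_sqrt_sum_sq, euc]
    rw [sum_single_sub_const_sq, Fintype.card_fin]
  have hfar := hausdorffDist_singleton_eq_of_forall_dist_le hsingle fun x ⟨hx0, hx1⟩ => by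
    rw [hdist, EuclideanSpace.dist_eq_sqrt_sum_sq]
    simpa only [Fintype.card_fin, euc] using Real.sqrt_le_sqrt (sum_sub_const_sq_le hx0 hx1 hε2)
  refine ⟨by rw [hfar, dist_eq_norm], ?_⟩
  rw [hfar, hdist, one_sub_two_mul_add_mul_sq_of_eq_inv hε (by linarith),
    Real.sqrt_mul' _ (by nlinarith), Real.sqrt_sq (by rw [hε]; positivity)]
end
end
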